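/- For every integer E with E ≡ 2 (mod 4) and E ≥ 6, |√2 - √2_E| < 2√2/E. -/

import Mathlib

/-- The truncated Catalan product
`√2_E = (2²/(1·3))·(6²/(5·7))···((E-4)²/((E-5)(E-3)))·(E/(E-1))` for `E ≡ 2 (mod 4)`. -/
noncomputable def catalanTrunc (E : ℕ) : ℝ :=
  (∏ k ∈ Finset.range ((E - 2) / 4),
    (4 * (k : ℝ) + 2) ^ 2 / ((4 * k + 1) * (4 * k + 3))) * ((E : ℝ) / (E - 1))

/-!
Euler's limit formula `Γ(s) = lim n^s n! / (s(s+1)⋯(s+n))` writes the partial Catalan products,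
up to factors tending to `1`, as `Γ(1/4)Γ(3/4)/Γ(1/2)²` evaluated along `GammaSeq`; by the
reflection formula this limit is `(π / sin (π/4)) / π = √2`. With `E = 4n + 2`, the truncations
`√2_E` decrease and `(E/(E+2))·√2_E` increase in `n`, so both sit on their side of the common
limit `√2`; the second inequality gives `√2_E < √2 + 2√2/E`.
-/

open Filter Real Finset Topology

lemma Real.GammaSeq_eq_div_prod (s : ℝ) (n : ℕ) :
    GammaSeq s n = n ^ s * n.factorial / ((∏ k ∈ range n, (s + k)) * (s + n)) := by
  rw [GammaSeq, prod_range_succ]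

lemma Real.Gamma_one_fourth_mul_Gamma_three_fourths_div_sq :
    Gamma (1 / 4) * Gamma (3 / 4) / Gamma (1 / 2) ^ 2 = √2 := by
  have hreflect := Gamma_mul_Gamma_one_sub (1 / 4)
  rw [show (1 : ℝ) - 1 / 4 = 3 / 4 by norm_num, show π * (1 / 4) = π / 4 by ring,
    sin_pi_div_four] at hreflect
  rw [hreflect, Gamma_one_half_eq, sq_sqrt pi_pos.le]
  have : √2 * √2 = 2 := mul_self_sqrt zero_le_two
  field_simp
  linarith

lemma tendsto_add_natCast_div_add_natCast (a b : ℝ) :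
    Tendsto (fun n : ℕ ↦ (a + n) / (b + n)) atTop (𝓝 1) := by
  have hden : Tendsto (fun n : ℕ ↦ b + n) atTop atTop :=
    tendsto_atTop_add_const_left _ b tendsto_natCast_atTop_atTop
  have : Tendsto (fun n : ℕ ↦ 1 + (a - b) / (b + n)) atTop (𝓝 (1 + 0)) :=
    tendsto_const_nhds.add (tendsto_const_nhds.div_atTop hden)
  rw [add_zero] at this
  refine this.congr' ?_
  filter_upwards [hden.eventually_gt_atTop 0] with n hn
  field_simp
  ring

noncomputable def catalanProd (n : ℕ) : ℝ :=
  ∏ k ∈ range n, (4 * (k : ℝ) + 2) ^ 2 / ((4 * k + 1) * (4 * k + 3))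

noncomputable def catalanUpper (n : ℕ) : ℝ := catalanProd n * ((4 * n + 2) / (4 * n + 1))

/-- `(E / (E + 2)) · √2_E` for `E = 4n + 2`. -/
noncomputable def catalanLower (n : ℕ) : ℝ := catalanUpper n * ((2 * n + 1) / (2 * n + 2))

lemma catalanTrunc_eq_catalanUpper (n : ℕ) : catalanTrunc (4 * n + 2) = catalanUpper n := by
  rw [catalanTrunc, catalanUpper, catalanProd, show (4 * n + 2 - 2) / 4 = n by omega]
  push_cast
  ring_nf

lemma catalanProd_eq_GammaSeq {n : ℕ} (hn : n ≠ 0) :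
    catalanProd n = GammaSeq (1 / 4) n * GammaSeq (3 / 4) n / GammaSeq (1 / 2) n ^ 2 *
      ((1 / 4 + n) / (1 / 2 + n) * ((3 / 4 + n) / (1 / 2 + n))) := by
  have hprod : catalanProd n = (∏ k ∈ range n, (1 / 2 + (k : ℝ))) ^ 2 /
      ((∏ k ∈ range n, (1 / 4 + (k : ℝ))) * ∏ k ∈ range n, (3 / 4 + (k : ℝ))) := by
    rw [catalanProd, ← prod_pow, ← prod_mul_distrib, ← prod_div_distrib]
    refine prod_congr rfl fun k _ ↦ ?_
    field_simp
    ring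
  have hn' : (0 : ℝ) < n := by positivity
  have hsq : ((n : ℝ) ^ (1 / 2 : ℝ)) ^ 2 = n := by
    rw [← rpow_natCast, ← rpow_mul hn'.le]; norm_num
  have hmul : (n : ℝ) ^ (1 / 4 : ℝ) * (n : ℝ) ^ (3 / 4 : ℝ) = n := by
    rw [← rpow_add hn']; norm_num
  have : (0 : ℝ) < ∏ k ∈ range n, (1 / 2 + (k : ℝ)) := prod_pos fun k _ ↦ by positivity
  have : (0 : ℝ) < ∏ k ∈ range n, (1 / 4 + (k : ℝ)) := prod_pos fun k _ ↦ by positivity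
  have : (0 : ℝ) < ∏ k ∈ range n, (3 / 4 + (k : ℝ)) := prod_pos fun k _ ↦ by positivity
  simp only [hprod, GammaSeq_eq_div_prod, div_pow, mul_pow, hsq]
  rw [div_mul_div_comm, mul_mul_mul_comm, hmul]
  field_simp

lemma tendsto_catalanProd : Tendsto catalanProd atTop (𝓝 √2) := by
  have hGamma : Tendsto (fun n ↦ GammaSeq (1 / 4) n * GammaSeq (3 / 4) n / GammaSeq (1 / 2) n ^ 2)
      atTop (𝓝 √2) := by
    rw [← Gamma_one_fourth_mul_Gamma_three_fourths_div_sq]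
    refine ((GammaSeq_tendsto_Gamma _).mul (GammaSeq_tendsto_Gamma _)).div
      ((GammaSeq_tendsto_Gamma _).pow 2) ?_
    rw [Gamma_one_half_eq, sq_sqrt pi_pos.le]
    exact pi_ne_zero
  have := hGamma.mul ((tendsto_add_natCast_div_add_natCast (1 / 4) (1 / 2)).mul
    (tendsto_add_natCast_div_add_natCast (3 / 4) (1 / 2)))
  rw [mul_one, mul_one] at this
  refine this.congr' ?_
  filter_upwards [eventually_ne_atTop 0] with n hn
  exact (catalanProd_eq_GammaSeq hn).symm

lemma tendsto_catalanUpper : Tendsto catalanUpper atTop (𝓝 √2) := by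
  have := tendsto_catalanProd.mul (tendsto_add_natCast_div_add_natCast (1 / 2) (1 / 4))
  rw [mul_one] at this
  refine this.congr fun n ↦ ?_
  rw [catalanUpper]
  congr 1
  field_simp
  ring

lemma tendsto_catalanLower : Tendsto catalanLower atTop (𝓝 √2) := by
  have := tendsto_catalanUpper.mul (tendsto_add_natCast_div_add_natCast (1 / 2) 1)
  rw [mul_one] at this
  refine this.congr fun n ↦ ?_
  rw [catalanLower]
  congr 1
  field_simp
  ring

lemma catalanUpper_succ (n : ℕ) : catalanUpper (n + 1) =
    catalanUpper n * ((4 * n + 2) * (4 * n + 6) / ((4 * n + 3) * (4 * n + 5))) := by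
  rw [catalanUpper, catalanUpper, catalanProd, catalanProd, prod_range_succ]
  push_cast
  field_simp
  ring

lemma catalanUpper_pos (n : ℕ) : 0 < catalanUpper n := by
  have : 0 < catalanProd n := prod_pos fun k _ ↦ by positivity
  rw [catalanUpper]
  positivity

lemma catalanUpper_antitone : Antitone catalanUpper := by
  refine antitone_nat_of_succ_le fun n ↦ ?_
  rw [catalanUpper_succ]
  refine mul_le_of_le_one_right (catalanUpper_pos n).le ((div_le_one (by positivity)).mpr ?_)
  nlinarith

lemma catalanLower_strictMono : StrictMono catalanLower := by
  refine strictMono_nat_of_lt_succ fun n ↦ ?_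
  rw [catalanLower, catalanLower, catalanUpper_succ, mul_assoc]
  refine mul_lt_mul_of_pos_left ?_ (catalanUpper_pos n)
  push_cast
  rw [div_mul_div_comm, div_lt_div_iff₀ (by positivity) (by positivity)]
  nlinarith

lemma sqrt_two_le_catalanUpper (n : ℕ) : √2 ≤ catalanUpper n :=
  catalanUpper_antitone.le_of_tendsto tendsto_catalanUpper n

lemma catalanLower_lt_sqrt_two (n : ℕ) : catalanLower n < √2 :=
  (catalanLower_strictMono n.lt_succ_self).trans_le
    (catalanLower_strictMono.monotone.ge_of_tendsto tendsto_catalanLower (n + 1))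

lemma abs_sqrt_two_sub_catalanUpper_lt (n : ℕ) : |√2 - catalanUpper n| < √2 / (2 * n + 1) := by
  have hlower := catalanLower_lt_sqrt_two n
  rw [catalanLower, mul_div_assoc', div_lt_iff₀ (by positivity)] at hlower
  rw [abs_sub_comm, abs_of_nonneg (sub_nonneg.mpr (sqrt_two_le_catalanUpper n)),
    lt_div_iff₀ (by positivity)]
  linarith

theorem catalan_trunc_error_general (E : ℕ) (hE : E % 4 = 2) :
    |Real.sqrt 2 - catalanTrunc E| < 2 * Real.sqrt 2 / E := by
  obtain ⟨n, rfl⟩ : ∃ n, E = 4 * n + 2 := ⟨E / 4, by omega⟩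
  rw [catalanTrunc_eq_catalanUpper]
  convert abs_sqrt_two_sub_catalanUpper_lt n using 1
  push_cast
  field_simp
  ring

theorem catalan_trunc_error (E : ℕ) (hE : E % 4 = 2) (hE6 : 6 ≤ E) :
    |Real.sqrt 2 - catalanTrunc E| < 2 * Real.sqrt 2 / E :=
  catalan_trunc_error_general E hE
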